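/- arXiv:1508.07949 — 4 statements merged into one kernel-verified Lean document; each statement's English description precedes it below -/
import Mathlib

section
/- Every maximal k-ideal of an ordered blueprint is prime. Concretely: let B be a commutative monoid with zero equipped with a preaddition (so that k-ideals make sense: a k-ideal is a subset I with 0 ∈ I, IB = I, and whenever c + Σaᵢ = Σbⱼ holds with all aᵢ, bⱼ ∈ I, then c ∈ I). If m is a maximal proper k-ideal of B, then the complement B \ m is multiplicatively closed, i.e. m is a prime k-ideal. -/
/-- Product of two finite formal sums (multisets) of elements of `A`:
the multiset of all pairwise products. -/
def msMul {A : Type*} [Mul A] (s t : Multiset A) : Multiset A :=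
  s.bind fun a => t.map (a * ·)

/-- An ordered blueprint structure on a commutative monoid with zero `A`:
a relation `le` on finite formal sums (multisets) of elements of `A` that is
reflexive, transitive, additive, multiplicative and identifies `0` with the
empty sum (axioms (B1)-(B5)). -/
structure OBP (A : Type*) [CommMonoidWithZero A] where
  le : Multiset A → Multiset A → Prop
  refl : ∀ a : A, le {a} {a}
  trans : ∀ {s t u : Multiset A}, le s t → le t u → le s u
  add : ∀ {s t u v : Multiset A}, le s t → le u v → le (s + u) (t + v)
  mul : ∀ {s t u v : Multiset A}, le s t → le u v → le (msMul s u) (msMul t v)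
  zero_le_empty : le {(0 : A)} 0
  empty_le_zero : le (0 : Multiset A) {(0 : A)}

/-- A k-ideal of the ordered blueprint `B`: a subset containing `0`, closed under
multiplication by arbitrary elements, and such that whenever
`c + Σaᵢ ≤ Σbⱼ` holds with all `aᵢ, bⱼ ∈ I`, then `c ∈ I`. -/
def IsKIdeal {A : Type*} [CommMonoidWithZero A] (B : OBP A) (I : Set A) : Prop :=
  (0 : A) ∈ I ∧ (∀ a ∈ I, ∀ b : A, a * b ∈ I) ∧
    ∀ (c : A) (s t : Multiset A), (∀ x ∈ s, x ∈ I) → (∀ x ∈ t, x ∈ I) →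
      B.le ({c} + s) t → c ∈ I

namespace OBPaux

variable {A : Type*} [CommMonoidWithZero A] (B : OBP A)

lemma mrefl : ∀ s : Multiset A, B.le s s := by
  intro s
  induction s using Multiset.induction with
  | empty => exact B.trans B.empty_le_zero B.zero_le_empty
  | cons a s ih =>
    have := B.add (B.refl a) ih
    simpa [Multiset.singleton_add] using this

lemma sum_le (P : A → Prop) :
    ∀ s : Multiset A, (∀ x ∈ s, ∃ u v : Multiset A, (∀ y ∈ u, P y) ∧ (∀ y ∈ v, P y) ∧
        B.le ({x} + u) v) →
      ∃ U V : Multiset A, (∀ y ∈ U, P y) ∧ (∀ y ∈ V, P y) ∧ B.le (s + U) V := by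
  intro s
  induction s using Multiset.induction with
  | empty =>
    intro _
    exact ⟨0, 0, by simp, by simp, mrefl B 0⟩
  | cons a s ih =>
    intro h
    obtain ⟨u, v, hu, hv, huv⟩ := h a (Multiset.mem_cons_self a s)
    obtain ⟨U, V, hU, hV, hUV⟩ := ih fun x hx => h x (Multiset.mem_cons_of_mem hx)
    refine ⟨u + U, v + V, ?_, ?_, ?_⟩
    · intro y hy; rcases Multiset.mem_add.mp hy with h' | h'
      exacts [hu y h', hU y h']
    · intro y hy; rcases Multiset.mem_add.mp hy with h' | h'
      exacts [hv y h', hV y h']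
    · have := B.add huv hUV
      have heq : ({a} + u) + (s + U) = (a ::ₘ s) + (u + U) := by
        simp only [← Multiset.singleton_add]; abel
      rwa [heq] at this

lemma le_sum (P : A → Prop) :
    ∀ s : Multiset A, (∀ x ∈ s, ∃ u v : Multiset A, (∀ y ∈ u, P y) ∧ (∀ y ∈ v, P y) ∧
        B.le v ({x} + u)) →
      ∃ U V : Multiset A, (∀ y ∈ U, P y) ∧ (∀ y ∈ V, P y) ∧ B.le V (s + U) := by
  intro s
  induction s using Multiset.induction with
  | empty =>
    intro _
    exact ⟨0, 0, by simp, by simp, mrefl B 0⟩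
  | cons a s ih =>
    intro h
    obtain ⟨u, v, hu, hv, huv⟩ := h a (Multiset.mem_cons_self a s)
    obtain ⟨U, V, hU, hV, hUV⟩ := ih fun x hx => h x (Multiset.mem_cons_of_mem hx)
    refine ⟨u + U, v + V, ?_, ?_, ?_⟩
    · intro y hy; rcases Multiset.mem_add.mp hy with h' | h'
      exacts [hu y h', hU y h']
    · intro y hy; rcases Multiset.mem_add.mp hy with h' | h'
      exacts [hv y h', hV y h']
    · have := B.add huv hUV
      have heq : ({a} + u) + (s + U) = (a ::ₘ s) + (u + U) := by
        simp only [← Multiset.singleton_add]; abel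
      rwa [heq] at this

lemma msMul_add_left (s t u : Multiset A) : msMul (s + t) u = msMul s u + msMul t u := by
  simp [msMul, Multiset.add_bind]

lemma msMul_singleton_right (s : Multiset A) (b : A) : msMul s {b} = s.map (· * b) := by
  simp [msMul]

lemma msMul_singleton_left (b : A) (t : Multiset A) : msMul {b} t = t.map (b * ·) := by
  simp [msMul]

end OBPaux


/-- **Every maximal k-ideal of a blueprint is prime.**  Here the blueprint is an
ordered blueprint whose relation is symmetric (a preaddition).  If `m` is a
proper k-ideal that is maximal among proper k-ideals, then its complement is
multiplicatively closed and contains `1`. -/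
theorem maximal_kIdeal_is_prime {A : Type*} [CommMonoidWithZero A] (B : OBP A)
    (hsymm : ∀ {s t : Multiset A}, B.le s t → B.le t s)
    (m : Set A) (hm : IsKIdeal B m)
    (hproper : m ≠ Set.univ)
    (hmax : ∀ J : Set A, IsKIdeal B J → m ⊆ J → J ≠ Set.univ → J = m) :
    (1 : A) ∉ m ∧ ∀ a b : A, a ∉ m → b ∉ m → a * b ∉ m := by
  obtain ⟨h0, hmul, hcl⟩ := hm
  have h1 : (1 : A) ∉ m := by
    intro h1
    apply hproper
    ext x
    simp only [Set.mem_univ, iff_true]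
    simpa using hmul 1 h1 x
  refine ⟨h1, fun a b ha hb hab => ?_⟩
  -- the predicate describing generators: m together with multiples of a
  set P : A → Prop := fun x => x ∈ m ∨ ∃ d : A, x = a * d with hP
  -- the k-ideal generated by m and a
  set J : Set A := {c | ∃ s t : Multiset A, (∀ y ∈ s, P y) ∧ (∀ y ∈ t, P y) ∧
      B.le ({c} + s) t} with hJ
  have hJideal : IsKIdeal B J := by
    refine ⟨⟨0, 0, by simp, by simp, by simpa using B.zero_le_empty⟩, ?_, ?_⟩
    · -- closed under multiplication
      rintro c ⟨s, t, hs, ht, hle⟩ e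
      refine ⟨s.map (· * e), t.map (· * e), ?_, ?_, ?_⟩
      · intro y hy
        obtain ⟨x, hx, rfl⟩ := Multiset.mem_map.mp hy
        rcases hs x hx with h' | ⟨d, rfl⟩
        · exact Or.inl (hmul x h' e)
        · exact Or.inr ⟨d * e, by rw [mul_assoc]⟩
      · intro y hy
        obtain ⟨x, hx, rfl⟩ := Multiset.mem_map.mp hy
        rcases ht x hx with h' | ⟨d, rfl⟩
        · exact Or.inl (hmul x h' e)
        · exact Or.inr ⟨d * e, by rw [mul_assoc]⟩
      · have := B.mul hle (B.refl e)
        simpa only [OBPaux.msMul_singleton_right, Multiset.map_add,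
          Multiset.map_singleton] using this
    · -- the k-ideal closure property
      intro c s' t' hs' ht' hle
      obtain ⟨U, V, hU, hV, hUV⟩ := OBPaux.sum_le B P t' fun x hx => ht' x hx
      obtain ⟨U', V', hU', hV', hUV'⟩ := OBPaux.le_sum B P s' fun x hx => by
        obtain ⟨u, v, hu, hv, huv⟩ := hs' x hx
        exact ⟨u, v, hu, hv, hsymm huv⟩
      -- chain: {c} + V' ≤ {c} + s' + U' ≤ t' + U', and t' + U ≤ V
      have step1 : B.le ({c} + V') ({c} + (s' + U')) := B.add (B.refl c) hUV'
      have step2 : B.le ({c} + (s' + U')) (t' + U') := by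
        have := B.add hle (OBPaux.mrefl B U')
        have heq : ({c} + s') + U' = {c} + (s' + U') := add_assoc _ _ _
        rwa [heq] at this
      have step3 : B.le ({c} + V' + U) (t' + U' + U) :=
        B.add (B.trans step1 step2) (OBPaux.mrefl B U)
      have step4 : B.le (t' + U' + U) (V + U') := by
        have := B.add hUV (OBPaux.mrefl B U')
        have heq : (t' + U) + U' = t' + U' + U := by abel
        rwa [heq] at this
      have final : B.le ({c} + (V' + U)) (V + U') := by
        have := B.trans step3 step4
        rwa [← add_assoc] 
      refine ⟨V' + U, V + U', ?_, ?_, final⟩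
      · intro y hy; rcases Multiset.mem_add.mp hy with h' | h'
        exacts [hV' y h', hU y h']
      · intro y hy; rcases Multiset.mem_add.mp hy with h' | h'
        exacts [hV y h', hU' y h']
  have hsub : m ⊆ J := fun c hc =>
    ⟨0, {c}, by simp, by simp [hP]; exact Or.inl hc, by simpa using B.refl c⟩
  have haJ : a ∈ J :=
    ⟨0, {a}, by simp, by simp [hP]; exact Or.inr ⟨1, (mul_one a).symm⟩,
      by simpa using B.refl a⟩
  -- J must be everything
  have hJuniv : J = Set.univ := by
    by_contra hne
    have := hmax J hJideal hsub hne
    rw [this] at haJ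
    exact ha haJ
  have h1J : (1 : A) ∈ J := hJuniv ▸ Set.mem_univ 1
  obtain ⟨s, t, hs, ht, hle⟩ := h1J
  -- multiply the relation 1 + Σs ≤ Σt by b
  have hmulb := B.mul hle (B.refl b)
  simp only [OBPaux.msMul_singleton_right, Multiset.map_add,
    Multiset.map_singleton, one_mul] at hmulb
  have hbm : b ∈ m := by
    refine hcl b (s.map (· * b)) (t.map (· * b)) ?_ ?_ hmulb
    · intro y hy
      obtain ⟨x, hx, rfl⟩ := Multiset.mem_map.mp hy
      rcases hs x hx with h' | ⟨d, rfl⟩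
      · exact hmul x h' b
      · have : a * d * b = a * b * d := mul_right_comm a d b
        rw [this]; exact hmul _ hab d
    · intro y hy
      obtain ⟨x, hx, rfl⟩ := Multiset.mem_map.mp hy
      rcases ht x hx with h' | ⟨d, rfl⟩
      · exact hmul x h' b
      · have : a * d * b = a * b * d := mul_right_comm a d b
        rw [this]; exact hmul _ hab d
  exact hb hbm
end

section
/- Every ordered blueprint containing an element −1 with 1 + (−1) ≡ 0 is algebraic: any relation Σaᵢ ≤ Σbⱼ implies the reverse relation Σbⱼ ≤ Σaᵢ, hence Σaᵢ ≡ Σbⱼ. -/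
lemma msMul_singleton {A : Type*} [Mul A] (a : A) (t : Multiset A) :
    msMul {a} t = t.map (a * ·) := by
  simp [msMul]

lemma msMul_add {A : Type*} [Mul A] (s u t : Multiset A) :
    msMul (s + u) t = msMul s t + msMul u t := by
  simp [msMul, Multiset.add_bind]

/-- Every ordered blueprint with `-1` (an element `e` with `1 + e ≡ 0`) is
algebraic: any relation `Σaᵢ ≤ Σbⱼ` implies the reverse relation
`Σbⱼ ≤ Σaᵢ`, hence `Σaᵢ ≡ Σbⱼ`. -/
theorem with_neg_one_is_algebraic {A : Type*} [CommMonoidWithZero A] (B : OBP A)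
    (hneg : ∃ e : A, B.le ({(1 : A)} + {e}) {(0 : A)} ∧ B.le {(0 : A)} ({(1 : A)} + {e})) :
    ∀ s t : Multiset A, B.le s t → B.le t s := by
  obtain ⟨e, h1, h2⟩ := hneg
  have refl_m : ∀ s : Multiset A, B.le s s := by
    intro s
    induction s using Multiset.induction with
    | empty => exact B.trans B.empty_le_zero B.zero_le_empty
    | cons a s ih =>
      have := B.add (B.refl a) ih
      simpa using this
  -- any multiset of products with 0 is ≤ empty and ≥ empty
  have map_zero_le : ∀ t : Multiset A, B.le (t.map ((0 : A) * ·)) 0 := by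
    intro t
    induction t using Multiset.induction with
    | empty => exact refl_m 0
    | cons a t ih =>
      have := B.add B.zero_le_empty ih
      simpa using this
  -- empty ≤ s + e·s
  have empty_le : ∀ s : Multiset A, B.le 0 (s + msMul {e} s) := by
    intro s
    induction s using Multiset.induction with
    | empty => simpa [msMul] using refl_m 0
    | cons a s ih =>
      have step : B.le 0 ({a} + {e * a}) := by
        have hm := B.mul h2 (B.refl a)
        rw [msMul_singleton, msMul_add, msMul_singleton, msMul_singleton] at hm
        simp only [Multiset.map_singleton, zero_mul, one_mul] at hm
        exact B.trans B.empty_le_zero hm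
      have := B.add step ih
      rw [msMul_singleton] at *
      simp only [Multiset.map_cons] at *
      rw [show ({a} + {e * a} : Multiset A) + (s + Multiset.map (e * ·) s)
            = (a ::ₘ s) + ((e * a) ::ₘ Multiset.map (e * ·) s) by
          simp only [← Multiset.singleton_add]; abel] at this
      simpa using this
  -- t + e·t ≤ empty
  have le_empty : ∀ t : Multiset A, B.le (t + msMul {e} t) 0 := by
    intro t
    have hm := B.mul h1 (refl_m t)
    rw [msMul_add, msMul_singleton, msMul_singleton, msMul_singleton] at hm
    simp only [one_mul, Multiset.map_id'] at hm
    rw [msMul_singleton]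
    exact B.trans hm (map_zero_le t)
  intro s t hst
  have h_es_et : B.le (msMul {e} s) (msMul {e} t) := B.mul (refl_m {e}) hst
  -- t ≤ t + (s + e·s)
  have step1 : B.le t ((t + s) + msMul {e} s) := by
    have := B.add (refl_m t) (empty_le s)
    rw [show t + 0 = t by simp, ← add_assoc] at this
    exact this
  have step2 : B.le ((t + s) + msMul {e} s) ((t + s) + msMul {e} t) :=
    B.add (refl_m (t + s)) h_es_et
  have step3 : B.le ((t + s) + msMul {e} t) s := by
    have := B.add (refl_m s) (le_empty t)
    rw [show s + (t + msMul {e} t) = (t + s) + msMul {e} t by rw [← add_assoc, add_comm s t],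
        show s + (0 : Multiset A) = s by simp] at this
    exact this
  exact B.trans (B.trans step1 step2) step3
end

section
/- Every totally positive ordered blueprint is strictly conic: if 0 ≤ 1 holds in B, then Σaᵢ + Σcₖ ≤ Σbⱼ and Σbⱼ + Σdₗ ≤ Σaᵢ imply Σaᵢ ≡ Σbⱼ. -/

lemma OBP.refl_ms {A : Type*} [CommMonoidWithZero A] (B : OBP A) (s : Multiset A) :
    B.le s s := by
  induction s using Multiset.induction with
  | empty => exact B.trans B.empty_le_zero B.zero_le_empty
  | cons a s ih =>
    have := B.add (B.refl a) ih
    simpa using this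

lemma OBP.empty_le {A : Type*} [CommMonoidWithZero A] (B : OBP A)
    (htp : B.le {(0 : A)} {(1 : A)}) (c : Multiset A) : B.le 0 c := by
  have h1 : B.le (0 : Multiset A) {(1 : A)} := B.trans B.empty_le_zero htp
  have := B.mul h1 (B.refl_ms c)
  simpa [msMul] using this

/-- Every totally positive ordered blueprint (`0 ≤ 1`) is strictly conic:
`Σaᵢ + Σcₖ ≤ Σbⱼ` and `Σbⱼ + Σdₗ ≤ Σaᵢ` imply `Σaᵢ ≡ Σbⱼ`. -/
theorem totallyPositive_strictlyConic {A : Type*} [CommMonoidWithZero A] (B : OBP A)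
    (htp : B.le {(0 : A)} {(1 : A)}) :
    ∀ s c t d : Multiset A, B.le (s + c) t → B.le (t + d) s →
      B.le s t ∧ B.le t s := by
  intro s c t d h1 h2
  constructor
  · have : B.le (s + 0) (s + c) := B.add (B.refl_ms s) (B.empty_le htp c)
    exact B.trans (by simpa using this) h1
  · have : B.le (t + 0) (t + d) := B.add (B.refl_ms t) (B.empty_le htp d)
    exact B.trans (by simpa using this) h2
end

section
/- The semiring R = ℕ[S,T]/(1 + S + T = 1) (the quotient of the polynomial semiring over ℕ in two variables S, T by the congruence generated by 1 + S + T ≡ 1) is a strict semiring (a + b = 0 implies a = b = 0) but is not strictly conic: 1 + S + T = 1 holds in R while 1 + S ≠ 1. -/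
open MvPolynomial

/-- The polynomial semiring `ℕ[S,T]` in two variables. -/
abbrev NatPoly2 : Type := MvPolynomial (Fin 2) ℕ

/-- The variable `S`. -/
noncomputable def Sv : NatPoly2 := X 0

/-- The variable `T`. -/
noncomputable def Tv : NatPoly2 := X 1

/-- The semiring congruence on `ℕ[S,T]` generated by `1 + S + T ≡ 1`. -/
noncomputable def relST : RingCon NatPoly2 :=
  ringConGen (fun a b => a = 1 + Sv + Tv ∧ b = 1)

lemma natpoly_add_eq_zero {p q : NatPoly2} (h : p + q = 0) : p = 0 ∧ q = 0 := by
  constructor <;> ext m <;>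
  · have := congrArg (MvPolynomial.coeff m) h
    simp [MvPolynomial.coeff_add] at this ⊢
    omega

noncomputable def evalZ : NatPoly2 →+* ℤ :=
  eval₂Hom (Nat.castRingHom ℤ) ![1, -1]

lemma rel_invariant {a b : NatPoly2} (h : relST a b) :
    (a = 0 ↔ b = 0) ∧ evalZ a = evalZ b := by
  induction h with
  | of x y h =>
      obtain ⟨hx, hy⟩ := h
      subst hx; subst hy
      constructor
      · constructor <;> intro h <;>
        · exfalso
          have := congrArg (MvPolynomial.coeff 0) h
          simp [Sv, Tv, MvPolynomial.coeff_add] at this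
      · simp [evalZ, Sv, Tv]
  | refl x => exact ⟨Iff.rfl, rfl⟩
  | symm _ ih => exact ⟨ih.1.symm, ih.2.symm⟩
  | trans _ _ ih1 ih2 => exact ⟨ih1.1.trans ih2.1, ih1.2.trans ih2.2⟩
  | add _ _ ih1 ih2 =>
      constructor
      · constructor <;> intro h
        · obtain ⟨h1, h2⟩ := natpoly_add_eq_zero h
          rw [ih1.1.mp h1, ih2.1.mp h2, add_zero]
        · obtain ⟨h1, h2⟩ := natpoly_add_eq_zero h
          rw [ih1.1.mpr h1, ih2.1.mpr h2, add_zero]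
      · simp [ih1.2, ih2.2]
  | mul _ _ ih1 ih2 =>
      constructor
      · rw [mul_eq_zero, mul_eq_zero, ih1.1, ih2.1]
      · simp [ih1.2, ih2.2]

/-- The semiring `R = ℕ[S,T]/(1 + S + T = 1)` is strict (`a + b = 0` implies
`a = b = 0`), satisfies `1 + S + T = 1`, but is not strictly conic:
`1 + S ≠ 1` in `R`. -/
theorem natPoly2_quotient_strict_not_strictlyConic :
    (∀ a b : relST.Quotient, a + b = 0 → a = 0 ∧ b = 0) ∧
    (((1 + Sv + Tv : NatPoly2) : relST.Quotient) = ((1 : NatPoly2) : relST.Quotient)) ∧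
    (((1 + Sv : NatPoly2) : relST.Quotient) ≠ ((1 : NatPoly2) : relST.Quotient)) := by
  refine ⟨?_, ?_, ?_⟩
  · intro a b
    induction a using Quot.inductionOn with
    | h p =>
    induction b using Quot.inductionOn with
    | h q =>
    intro h
    have h' : relST (p + q) 0 := relST.eq.mp h
    have h0 : p + q = 0 := (rel_invariant h').1.mpr rfl
    obtain ⟨hp, hq⟩ := natpoly_add_eq_zero h0
    subst hp; subst hq
    exact ⟨rfl, rfl⟩
  · exact relST.eq.mpr (RingConGen.Rel.of _ _ ⟨rfl, rfl⟩)
  · intro h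
    have h' : relST (1 + Sv) 1 := relST.eq.mp h
    have := (rel_invariant h').2
    simp [evalZ, Sv] at this
end
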